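/- Let μ be a finite positive Borel measure on the unit circle T with infinite support, w ∈ T, ζ_{0n}, …, ζ_{nn} ∈ T the zeros of the para-orthogonal polynomial B_{n+1}(w,·), K_n the Christoffel kernel, and L_n the Lagrange interpolation operator at these zeros. For every continuous f : T → ℂ and every g ∈ L²(μ), |∫_T L_n(f) conj(g) dμ| ≤ μ(T)^{1/2} · (max_{z∈T} |f(z)|) · (∫_T |S_n(g)|² dμ)^{1/2}, where S_n(g) = Σ_{k=0}^n ⟨g, φ_k⟩ φ_k is the n-th partial sum of the Fourier expansion of g in the orthonormal polynomials {φ_k}. -/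

import Mathlib

open MeasureTheory Polynomial Filter
open scoped ComplexConjugate Topology

/-- The Christoffel kernel `K_n(w,z) = ∑_{j=0}^n conj(φ_j(w)) φ_j(z)`. -/
noncomputable def christoffelK (φ : ℕ → Polynomial ℂ) (n : ℕ) (w z : ℂ) : ℂ :=
  ∑ j ∈ Finset.range (n + 1), conj ((φ j).eval w) * (φ j).eval z

/-- The para-orthogonal polynomial `B_{n+1}(w,z) = (1 − conj(w) z) K_n(w,z)`. -/
noncomputable def paraOrtho (φ : ℕ → Polynomial ℂ) (n : ℕ) (w z : ℂ) : ℂ :=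
  (1 - conj w * z) * christoffelK φ n w z

/-- The `j`-th fundamental (Lagrange) polynomial for the nodes `ζ`:
`ℓ_{jn}(z) = K_n(z, ζ_{jn}) / K_n(ζ_{jn}, ζ_{jn})`.  Note that by Hermitian symmetry of the
kernel, `K_n(z, ζ) = conj (K_n(ζ, z))`; as a *polynomial* in `z` (of degree `n`, as in the
paper) the fundamental polynomial is `z ↦ K_n(ζ_{jn}, z) / K_n(ζ_{jn}, ζ_{jn})`, with
`K_n(ζ_{jn}, ζ_{jn}) = ∑_k |φ_k(ζ_{jn})|²` a positive real number. -/
noncomputable def ellFun (φ : ℕ → Polynomial ℂ) (n : ℕ) (ζ : Fin (n + 1) → ℂ)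
    (j : Fin (n + 1)) (z : ℂ) : ℂ :=
  christoffelK φ n (ζ j) z / christoffelK φ n (ζ j) (ζ j)

/-- The `n`-th Lagrange interpolation polynomial of `f` at the nodes `ζ`:
`L_n(f)(z) = ∑_{j=0}^n f(ζ_{jn}) ℓ_{jn}(z)`. -/
noncomputable def lagrangeInterp (φ : ℕ → Polynomial ℂ) (n : ℕ) (ζ : Fin (n + 1) → ℂ)
    (f : ℂ → ℂ) (z : ℂ) : ℂ :=
  ∑ j : Fin (n + 1), f (ζ j) * ellFun φ n ζ j z

open scoped InnerProductSpace ENNReal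

/-!
Polynomials embed in `L²(μ)`, where multiplication by `z` is an isometry because `μ` lives on the
circle. The para-orthogonal polynomial `B = B_{n+1}(w, ·)` is orthogonal to `z p` for every `p`
of degree `< n`; on the circle this makes `B / (· - ζ_j)` orthogonal to every polynomial of
degree `≤ n` vanishing at `ζ_j`, so it is proportional to `K_n(ζ_j, ·)`, which therefore vanishes
at the other nodes. Hence the normalized kernels `u_j = K_n(ζ_j, ·) / ‖K_n(ζ_j, ·)‖` are
orthonormal and `L_n f = ∑ f(ζ_j) ⟨u_j, 1⟩ u_j`, so Bessel's inequality gives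
`‖L_n f‖ ≤ max |f| · ‖1‖`. Since `S_n g` is the orthogonal projection of `g` onto polynomials of
degree `≤ n`, `∫ L_n(f) conj(g) dμ = ⟨S_n g, L_n f⟩`, and Cauchy–Schwarz concludes.
-/

lemma Orthonormal.norm_sum_mul_inner_smul_le {𝕜 E ι : Type*} [RCLike 𝕜] [NormedAddCommGroup E]
    [InnerProductSpace 𝕜 E] {v : ι → E} (hv : Orthonormal 𝕜 v) (s : Finset ι) (x : E)
    {c : ι → 𝕜} {M : ℝ} (hM : 0 ≤ M) (hc : ∀ i ∈ s, ‖c i‖ ≤ M) :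
    ‖∑ i ∈ s, (c i * ⟪v i, x⟫_𝕜) • v i‖ ≤ M * ‖x‖ := by
  have hsq : ‖∑ i ∈ s, (c i * ⟪v i, x⟫_𝕜) • v i‖ ^ 2
      = ∑ i ∈ s, ‖c i‖ ^ 2 * ‖⟪v i, x⟫_𝕜‖ ^ 2 := by
    rw [@norm_sq_eq_re_inner 𝕜, hv.inner_sum, map_sum]
    refine Finset.sum_congr rfl fun i _ => ?_
    rw [RCLike.conj_mul, ← RCLike.ofReal_pow, RCLike.ofReal_re, norm_mul, mul_pow]
  refine le_of_pow_le_pow_left₀ two_ne_zero (by positivity) ?_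
  calc _ = ∑ i ∈ s, ‖c i‖ ^ 2 * ‖⟪v i, x⟫_𝕜‖ ^ 2 := hsq
    _ ≤ ∑ i ∈ s, M ^ 2 * ‖⟪v i, x⟫_𝕜‖ ^ 2 :=
      Finset.sum_le_sum fun i hi => by gcongr; exact hc i hi
    _ = M ^ 2 * ∑ i ∈ s, ‖⟪v i, x⟫_𝕜‖ ^ 2 := by rw [Finset.mul_sum]
    _ ≤ M ^ 2 * ‖x‖ ^ 2 := by gcongr; exact hv.sum_inner_products_le x
    _ = (M * ‖x‖) ^ 2 := by ring

section L2

variable {α : Type*} [MeasurableSpace α] {μ : Measure α}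

lemma inner_toLp_toLp_eq_integral {f g : α → ℂ} (hf : MemLp f 2 μ) (hg : MemLp g 2 μ) :
    ⟪hf.toLp f, hg.toLp g⟫_ℂ = ∫ a, conj (f a) * g a ∂μ := by
  rw [L2.inner_def]
  refine integral_congr_ae ?_
  filter_upwards [hf.coeFn_toLp, hg.coeFn_toLp] with a hfa hga
  rw [hfa, hga, RCLike.inner_apply']

lemma norm_toLp_eq_sqrt_integral {f : α → ℂ} (hf : MemLp f 2 μ) :
    ‖hf.toLp f‖ = √(∫ a, ‖f a‖ ^ 2 ∂μ) := by
  have h := inner_toLp_toLp_eq_integral hf hf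
  simp_rw [inner_self_eq_norm_sq_to_K, Complex.conj_mul', ← Complex.ofReal_pow,
    integral_complex_ofReal] at h
  have h' : ‖hf.toLp f‖ ^ 2 = ∫ a, ‖f a‖ ^ 2 ∂μ :=
    Complex.ofReal_inj.1 (by push_cast; exact h)
  rw [← h', Real.sqrt_sq (norm_nonneg _)]

lemma Continuous.memLp_of_ae_mem_compact {E : Type*} [NormedAddCommGroup E] [TopologicalSpace α]
    [OpensMeasurableSpace α] [SecondCountableTopologyEither α E] [IsFiniteMeasure μ] {f : α → E}
    (hf : Continuous f) {K : Set α} (hK : IsCompact K) (hμ : ∀ᵐ a ∂μ, a ∈ K) (p : ℝ≥0∞) :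
    MemLp f p μ := by
  obtain ⟨C, hC⟩ := hK.exists_bound_of_continuousOn hf.continuousOn
  exact MemLp.of_bound hf.aestronglyMeasurable C (hμ.mono hC)

end L2

noncomputable def christoffelKPoly (φ : ℕ → ℂ[X]) (n : ℕ) (a : ℂ) : ℂ[X] :=
  ∑ k ∈ Finset.range (n + 1), conj ((φ k).eval a) • φ k

noncomputable def paraOrthoPoly (φ : ℕ → ℂ[X]) (n : ℕ) (w : ℂ) : ℂ[X] :=
  (1 - C (conj w) * X) * christoffelKPoly φ n w

noncomputable def lagrangeInterpPoly (φ : ℕ → ℂ[X]) (n : ℕ) (ζ : Fin (n + 1) → ℂ) (f : ℂ → ℂ) :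
    ℂ[X] :=
  ∑ j, (f (ζ j) / christoffelK φ n (ζ j) (ζ j)) • christoffelKPoly φ n (ζ j)

section Polynomials

variable {φ : ℕ → ℂ[X]} {n : ℕ}

@[simp]
lemma eval_christoffelKPoly (a z : ℂ) :
    (christoffelKPoly φ n a).eval z = christoffelK φ n a z := by
  simp [christoffelKPoly, christoffelK, eval_finsetSum]

@[simp]
lemma eval_paraOrthoPoly (w z : ℂ) : (paraOrthoPoly φ n w).eval z = paraOrtho φ n w z := by
  simp [paraOrthoPoly, paraOrtho]

@[simp]
lemma eval_lagrangeInterpPoly (ζ : Fin (n + 1) → ℂ) (f : ℂ → ℂ) (z : ℂ) :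
    (lagrangeInterpPoly φ n ζ f).eval z = lagrangeInterp φ n ζ f z := by
  simp [lagrangeInterpPoly, lagrangeInterp, ellFun, eval_finsetSum, div_mul_eq_mul_div,
    mul_div_assoc]

lemma natDegree_christoffelKPoly_le (hdeg : ∀ k, (φ k).degree = k) (a : ℂ) :
    (christoffelKPoly φ n a).natDegree ≤ n := by
  refine natDegree_sum_le_of_forall_le _ _ fun k hk => (natDegree_smul_le _ _).trans ?_
  rw [natDegree_eq_of_degree_eq_some (hdeg k)]
  exact Nat.lt_succ_iff.1 (Finset.mem_range.1 hk)

lemma natDegree_paraOrthoPoly_le (hdeg : ∀ k, (φ k).degree = k) (w : ℂ) :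
    (paraOrthoPoly φ n w).natDegree ≤ n + 1 := by
  rw [paraOrthoPoly, add_comm]
  refine natDegree_mul_le.trans (add_le_add ?_ (natDegree_christoffelKPoly_le hdeg w))
  exact (natDegree_sub_le _ _).trans
    (max_le (by simp) ((natDegree_C_mul_le _ _).trans natDegree_X_le))

lemma mem_span_of_natDegree_le (hdeg : ∀ k, (φ k).degree = k) {p : ℂ[X]}
    (hp : p.natDegree ≤ n) : p ∈ Submodule.span ℂ (φ '' Set.Iic n) := by
  let S : Sequence ℂ := ⟨φ, hdeg⟩
  rw [S.span_degreeLE fun i _ => (leadingCoeff_ne_zero.2 (S.ne_zero i)).isUnit]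
  exact mem_degreeLE.2 (degree_le_of_natDegree_le hp)

lemma natDegree_lagrangeInterpPoly_le (hdeg : ∀ k, (φ k).degree = k)
    (ζ : Fin (n + 1) → ℂ) (f : ℂ → ℂ) : (lagrangeInterpPoly φ n ζ f).natDegree ≤ n :=
  natDegree_sum_le_of_forall_le _ _ fun _ _ =>
    (natDegree_smul_le _ _).trans (natDegree_christoffelKPoly_le hdeg _)

end Polynomials

section ReproducingKernel

variable {E : Type*} [NormedAddCommGroup E] [InnerProductSpace ℂ E] {P : ℂ[X] →ₗ[ℂ] E}
  {φ : ℕ → ℂ[X]} {n : ℕ}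

lemma inner_christoffelKPoly_left (hφ : Orthonormal ℂ (P ∘ φ)) (hdeg : ∀ k, (φ k).degree = k)
    (a : ℂ) {p : ℂ[X]} (hp : p.natDegree ≤ n) :
    ⟪P (christoffelKPoly φ n a), P p⟫_ℂ = p.eval a := by
  refine LinearMap.eqOn_span' (f := (innerₛₗ ℂ (P (christoffelKPoly φ n a))).comp P)
    (g := leval a) ?_ (mem_span_of_natDegree_le hdeg hp)
  rintro _ ⟨m, hm, rfl⟩
  have hK : P (christoffelKPoly φ n a)
      = ∑ k ∈ Finset.range (n + 1), conj ((φ k).eval a) • (P ∘ φ) k := by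
    simp [christoffelKPoly]
  simp only [LinearMap.comp_apply, innerₛₗ_apply_apply, leval_apply, hK]
  exact (hφ.inner_left_sum _ (Finset.mem_range.2 (Nat.lt_succ_of_le hm))).trans
    (Complex.conj_conj _)

lemma inner_christoffelKPoly_one (hφ : Orthonormal ℂ (P ∘ φ)) (hdeg : ∀ k, (φ k).degree = k)
    (a : ℂ) : ⟪P (christoffelKPoly φ n a), P 1⟫_ℂ = 1 := by
  simpa using inner_christoffelKPoly_left hφ hdeg a (p := 1) (by simp)

lemma christoffelKPoly_ne_zero (hφ : Orthonormal ℂ (P ∘ φ)) (hdeg : ∀ k, (φ k).degree = k)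
    (a : ℂ) : P (christoffelKPoly φ n a) ≠ 0 := fun h => by
  simpa [h] using inner_christoffelKPoly_one hφ hdeg (n := n) a

lemma christoffelK_self_eq_norm_sq (hφ : Orthonormal ℂ (P ∘ φ)) (hdeg : ∀ k, (φ k).degree = k)
    (a : ℂ) : christoffelK φ n a a = (‖P (christoffelKPoly φ n a)‖ : ℂ) ^ 2 := by
  rw [← eval_christoffelKPoly,
    ← inner_christoffelKPoly_left hφ hdeg a (natDegree_christoffelKPoly_le hdeg a),
    inner_self_eq_norm_sq_to_K]
  rfl

lemma christoffelK_self_ne_zero (hφ : Orthonormal ℂ (P ∘ φ)) (hdeg : ∀ k, (φ k).degree = k)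
    (a : ℂ) : christoffelK φ n a a ≠ 0 := by
  rw [christoffelK_self_eq_norm_sq hφ hdeg]
  exact pow_ne_zero 2 (Complex.ofReal_ne_zero.2 (norm_ne_zero_iff.2
    (christoffelKPoly_ne_zero hφ hdeg a)))

/-- `u` is proportional to `K_n(a, ·)`, which spans the orthogonal complement of
`{p | p(a) = 0}` among polynomials of degree `≤ n`. -/
lemma christoffelK_self_mul_eval_eq (hφ : Orthonormal ℂ (P ∘ φ))
    (hdeg : ∀ k, (φ k).degree = k) {a : ℂ} {u : ℂ[X]} (hu : u.natDegree ≤ n)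
    (hperp : ∀ p : ℂ[X], p.natDegree ≤ n → p.IsRoot a → ⟪P u, P p⟫_ℂ = 0) (z : ℂ) :
    christoffelK φ n a a * u.eval z = u.eval a * christoffelK φ n a z := by
  set d := christoffelK φ n a a • u - u.eval a • christoffelKPoly φ n a
  have hd : d.natDegree ≤ n := (natDegree_sub_le _ _).trans <| max_le
    ((natDegree_smul_le _ _).trans hu)
    ((natDegree_smul_le _ _).trans (natDegree_christoffelKPoly_le hdeg a))
  have hda : d.IsRoot a := by simp [d, mul_comm]
  have hPd : P d = 0 := by
    have hexp : P d = christoffelK φ n a a • P u - u.eval a • P (christoffelKPoly φ n a) := by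
      simp [d]
    rw [← inner_self_eq_zero (𝕜 := ℂ)]
    nth_rewrite 1 [hexp]
    rw [inner_sub_left, inner_smul_left, inner_smul_left,
      hperp d hd hda, inner_christoffelKPoly_left hφ hdeg a hd, hda.eq_zero, mul_zero, mul_zero,
      sub_zero]
  have hdz : d.eval z = 0 := by
    rw [← inner_christoffelKPoly_left hφ hdeg z hd, hPd, inner_zero_right]
  simpa [d, sub_eq_zero] using hdz

noncomputable def fourierPartialSum (P : ℂ[X] →ₗ[ℂ] E) (φ : ℕ → ℂ[X]) (n : ℕ) (x : E) :
    ℂ[X] :=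
  ∑ k ∈ Finset.range (n + 1), ⟪P (φ k), x⟫_ℂ • φ k

lemma inner_fourierPartialSum_left (hφ : Orthonormal ℂ (P ∘ φ))
    (hdeg : ∀ k, (φ k).degree = k) (x : E) {p : ℂ[X]} (hp : p.natDegree ≤ n) :
    ⟪P (fourierPartialSum P φ n x), P p⟫_ℂ = ⟪x, P p⟫_ℂ := by
  refine LinearMap.eqOn_span' (f := (innerₛₗ ℂ (P (fourierPartialSum P φ n x))).comp P)
    (g := (innerₛₗ ℂ x).comp P) ?_ (mem_span_of_natDegree_le hdeg hp)
  rintro _ ⟨m, hm, rfl⟩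
  have hS : P (fourierPartialSum P φ n x)
      = ∑ k ∈ Finset.range (n + 1), ⟪(P ∘ φ) k, x⟫_ℂ • (P ∘ φ) k := by
    simp [fourierPartialSum]
  simp only [LinearMap.comp_apply, innerₛₗ_apply_apply, hS]
  exact (hφ.inner_left_sum _ (Finset.mem_range.2 (Nat.lt_succ_of_le hm))).trans
    (inner_conj_symm _ _)

end ReproducingKernel

section ParaOrthogonal

variable {E : Type*} [NormedAddCommGroup E] [InnerProductSpace ℂ E] {P : ℂ[X] →ₗ[ℂ] E}
  {φ : ℕ → ℂ[X]} {n : ℕ}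

lemma inner_X_sub_C_mul_right (hX : ∀ p q, ⟪P (X * p), P (X * q)⟫_ℂ = ⟪P p, P q⟫_ℂ) {a : ℂ}
    (ha : ‖a‖ = 1) (p q : ℂ[X]) :
    ⟪P p, P ((X - C a) * q)⟫_ℂ = -a * ⟪P ((X - C a) * p), P (X * q)⟫_ℂ := by
  have haa : a * conj a = 1 := by
    rw [Complex.mul_conj, Complex.normSq_eq_norm_sq, ha, one_pow, Complex.ofReal_one]
  simp only [sub_mul, C_mul', map_sub, map_smul, inner_sub_left, inner_sub_right, inner_smul_left,
    inner_smul_right, hX]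
  linear_combination (-⟪P p, P (X * q)⟫_ℂ) * haa

lemma inner_paraOrthoPoly_X_mul (hφ : Orthonormal ℂ (P ∘ φ)) (hdeg : ∀ k, (φ k).degree = k)
    (hX : ∀ p q, ⟪P (X * p), P (X * q)⟫_ℂ = ⟪P p, P q⟫_ℂ) (w : ℂ) {s : ℂ[X]}
    (hs : (X * s).natDegree ≤ n) : ⟪P (paraOrthoPoly φ n w), P (X * s)⟫_ℂ = 0 := by
  have hs' : s.natDegree ≤ n := by
    rcases eq_or_ne s 0 with rfl | h
    · simp
    · rw [natDegree_X_mul h] at hs; omega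
  rw [paraOrthoPoly, sub_mul, one_mul, mul_assoc, C_mul', map_sub, map_smul, inner_sub_left,
    inner_smul_left, hX, inner_christoffelKPoly_left hφ hdeg w hs,
    inner_christoffelKPoly_left hφ hdeg w hs', Complex.conj_conj, eval_mul, eval_X, sub_self]

lemma inner_paraOrthoPoly_divByMonic (hφ : Orthonormal ℂ (P ∘ φ))
    (hdeg : ∀ k, (φ k).degree = k) (hX : ∀ p q, ⟪P (X * p), P (X * q)⟫_ℂ = ⟪P p, P q⟫_ℂ)
    {w a : ℂ} (ha : ‖a‖ = 1) (hBa : paraOrtho φ n w a = 0) {p : ℂ[X]} (hp : p.natDegree ≤ n)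
    (hpa : p.IsRoot a) : ⟪P (paraOrthoPoly φ n w /ₘ (X - C a)), P p⟫_ℂ = 0 := by
  set s := p /ₘ (X - C a)
  have hps : (X - C a) * s = p := mul_divByMonic_eq_iff_isRoot.2 hpa
  have hXs : (X * s).natDegree ≤ n := by
    have : (X * s).degree = ((X - C a) * s).degree := by
      rw [degree_mul, degree_mul, degree_X, degree_X_sub_C]
    rwa [natDegree_eq_of_degree_eq this, hps]
  rw [← hps, inner_X_sub_C_mul_right hX ha,
    mul_divByMonic_eq_iff_isRoot.2 (by rwa [IsRoot.def, eval_paraOrthoPoly]),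
    inner_paraOrthoPoly_X_mul hφ hdeg hX w hXs, mul_zero]

/-- The quotient `B_{n+1}(w, ·) / (· - a)` is proportional to `K_n(a, ·)` and vanishes at `b`. -/
lemma christoffelK_eq_zero_of_paraOrtho_eq_zero (hφ : Orthonormal ℂ (P ∘ φ))
    (hdeg : ∀ k, (φ k).degree = k) (hX : ∀ p q, ⟪P (X * p), P (X * q)⟫_ℂ = ⟪P p, P q⟫_ℂ)
    {w a b : ℂ} (ha : ‖a‖ = 1) (hab : a ≠ b) (hBa : paraOrtho φ n w a = 0)
    (hBb : paraOrtho φ n w b = 0) : christoffelK φ n a b = 0 := by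
  set B := paraOrthoPoly φ n w
  set ℓ := B /ₘ (X - C a)
  have hBℓ : (X - C a) * ℓ = B :=
    mul_divByMonic_eq_iff_isRoot.2 (by rwa [IsRoot.def, eval_paraOrthoPoly])
  have hℓdeg : ℓ.natDegree ≤ n := by
    have : B.natDegree ≤ n + 1 := natDegree_paraOrthoPoly_le hdeg w
    rw [natDegree_divByMonic _ (monic_X_sub_C a), natDegree_X_sub_C]
    omega
  have key := christoffelK_self_mul_eval_eq hφ hdeg hℓdeg
    fun p hp hpa => inner_paraOrthoPoly_divByMonic hφ hdeg hX ha hBa hp hpa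
  have hℓb : ℓ.eval b = 0 := by
    have h := congrArg (eval b) hBℓ
    rw [eval_mul, eval_paraOrthoPoly, hBb] at h
    simpa [sub_eq_zero, hab.symm] using h
  by_cases hℓa : ℓ.eval a = 0
  · have hℓ0 : ℓ = 0 := Polynomial.funext fun z => by
      simpa [hℓa, christoffelK_self_ne_zero hφ hdeg] using key z
    have hB : B ≠ 0 := by
      refine mul_ne_zero (fun h => by simpa using congrArg (coeff · 0) h) fun h => ?_
      exact christoffelKPoly_ne_zero hφ hdeg w (by rw [h, map_zero])
    exact absurd (by rw [← hBℓ, hℓ0, mul_zero]) hB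
  · simpa [hℓb, hℓa] using (key b).symm

lemma orthonormal_normalized_christoffelKPoly (hφ : Orthonormal ℂ (P ∘ φ))
    (hdeg : ∀ k, (φ k).degree = k) (hX : ∀ p q, ⟪P (X * p), P (X * q)⟫_ℂ = ⟪P p, P q⟫_ℂ)
    {w : ℂ} {ζ : Fin (n + 1) → ℂ} (hζT : ∀ j, ‖ζ j‖ = 1) (hζinj : Function.Injective ζ)
    (hζ0 : ∀ j, paraOrtho φ n w (ζ j) = 0) :
    Orthonormal ℂ fun j =>
      (‖P (christoffelKPoly φ n (ζ j))‖⁻¹ : ℂ) • P (christoffelKPoly φ n (ζ j)) := by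
  refine ⟨fun j => norm_smul_inv_norm (christoffelKPoly_ne_zero hφ hdeg _), fun i j hij => ?_⟩
  dsimp only
  rw [inner_smul_left, inner_smul_right,
    inner_christoffelKPoly_left hφ hdeg _ (natDegree_christoffelKPoly_le hdeg _),
    eval_christoffelKPoly, christoffelK_eq_zero_of_paraOrtho_eq_zero hφ hdeg hX (hζT j)
      (hζinj.ne hij.symm) (hζ0 j) (hζ0 i), mul_zero, mul_zero]

lemma norm_lagrangeInterpPoly_le (hφ : Orthonormal ℂ (P ∘ φ)) (hdeg : ∀ k, (φ k).degree = k)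
    (hX : ∀ p q, ⟪P (X * p), P (X * q)⟫_ℂ = ⟪P p, P q⟫_ℂ) {w : ℂ} {ζ : Fin (n + 1) → ℂ}
    (hζT : ∀ j, ‖ζ j‖ = 1) (hζinj : Function.Injective ζ) (hζ0 : ∀ j, paraOrtho φ n w (ζ j) = 0)
    {f : ℂ → ℂ} {M : ℝ} (hM : 0 ≤ M) (hf : ∀ j, ‖f (ζ j)‖ ≤ M) :
    ‖P (lagrangeInterpPoly φ n ζ f)‖ ≤ M * ‖P 1‖ := by
  have hu := orthonormal_normalized_christoffelKPoly hφ hdeg hX hζT hζinj hζ0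
  convert hu.norm_sum_mul_inner_smul_le Finset.univ (P 1) hM fun j _ => hf j using 2
  simp only [lagrangeInterpPoly, map_sum, map_smul, inner_smul_left,
    inner_christoffelKPoly_one hφ hdeg, smul_smul, christoffelK_self_eq_norm_sq hφ hdeg]
  refine Finset.sum_congr rfl fun j _ => ?_
  have := norm_ne_zero_iff.2 (christoffelKPoly_ne_zero hφ hdeg (n := n) (ζ j))
  congr 1
  simp only [map_inv₀, Complex.conj_ofReal, mul_one]
  field_simp

end ParaOrthogonal

section CircleMeasure

variable {μ : Measure ℂ} [IsFiniteMeasure μ]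

lemma memLp_eval (hμ : ∀ᵐ z ∂μ, z ∈ Metric.sphere (0 : ℂ) 1) (p : ℂ[X]) :
    MemLp (fun z => p.eval z) 2 μ :=
  p.continuous.memLp_of_ae_mem_compact (isCompact_sphere 0 1) hμ 2

noncomputable def polyToL2 (hμ : ∀ᵐ z ∂μ, z ∈ Metric.sphere (0 : ℂ) 1) :
    ℂ[X] →ₗ[ℂ] Lp ℂ 2 μ where
  toFun p := (memLp_eval hμ p).toLp _
  map_add' p q := Lp.ext <| by
    filter_upwards [(memLp_eval hμ (p + q)).coeFn_toLp, (memLp_eval hμ p).coeFn_toLp,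
      (memLp_eval hμ q).coeFn_toLp, Lp.coeFn_add ((memLp_eval hμ p).toLp _)
        ((memLp_eval hμ q).toLp _)] with z h h₁ h₂ h₃
    rw [h, h₃, Pi.add_apply, h₁, h₂, eval_add]
  map_smul' c p := Lp.ext <| by
    filter_upwards [(memLp_eval hμ (c • p)).coeFn_toLp, (memLp_eval hμ p).coeFn_toLp,
      Lp.coeFn_smul c ((memLp_eval hμ p).toLp _)] with z h h₁ h₂
    rw [h, RingHom.id_apply, h₂, Pi.smul_apply, h₁, eval_smul]

variable (hμ : ∀ᵐ z ∂μ, z ∈ Metric.sphere (0 : ℂ) 1)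

lemma polyToL2_apply (p : ℂ[X]) : polyToL2 hμ p = (memLp_eval hμ p).toLp _ := rfl

lemma norm_polyToL2 (p : ℂ[X]) : ‖polyToL2 hμ p‖ = √(∫ z, ‖p.eval z‖ ^ 2 ∂μ) :=
  norm_toLp_eq_sqrt_integral (memLp_eval hμ p)

lemma inner_polyToL2_X_mul (p q : ℂ[X]) :
    ⟪polyToL2 hμ (X * p), polyToL2 hμ (X * q)⟫_ℂ = ⟪polyToL2 hμ p, polyToL2 hμ q⟫_ℂ := by
  simp only [polyToL2_apply, inner_toLp_toLp_eq_integral]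
  refine integral_congr_ae (hμ.mono fun z hz => ?_)
  have hzz : conj z * z = 1 := by
    rw [Complex.conj_mul', mem_sphere_zero_iff_norm.1 hz, Complex.ofReal_one, one_pow]
  simp only [eval_mul, eval_X, map_mul]
  linear_combination (conj (p.eval z) * q.eval z) * hzz

lemma integral_eval_mul_conj {g : ℂ → ℂ} (hg : MemLp g 2 μ) (p : ℂ[X]) :
    ∫ z, p.eval z * conj (g z) ∂μ = ⟪hg.toLp g, polyToL2 hμ p⟫_ℂ := by
  simp_rw [polyToL2_apply, inner_toLp_toLp_eq_integral, mul_comm]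

lemma orthonormal_polyToL2_comp {φ : ℕ → ℂ[X]}
    (horth : ∀ k m, ∫ z, (φ k).eval z * conj ((φ m).eval z) ∂μ = if k = m then 1 else 0) :
    Orthonormal ℂ (polyToL2 hμ ∘ φ) := orthonormal_iff_ite.2 fun i j => by
  rw [Function.comp_apply, Function.comp_apply, polyToL2_apply hμ (φ i), ← integral_eval_mul_conj,
    horth]
  exact if_congr eq_comm rfl rfl

lemma eval_fourierPartialSum_polyToL2 {φ : ℕ → ℂ[X]} {n : ℕ} {g : ℂ → ℂ} (hg : MemLp g 2 μ)
    (z : ℂ) : (fourierPartialSum (polyToL2 hμ) φ n (hg.toLp g)).eval z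
      = ∑ k ∈ Finset.range (n + 1), (∫ x, g x * conj ((φ k).eval x) ∂μ) * (φ k).eval z := by
  simp [fourierPartialSum, eval_finsetSum, polyToL2_apply, inner_toLp_toLp_eq_integral, mul_comm]

end CircleMeasure

theorem abs_integral_lagrangeInterp_mul_conj_le_general
    (μ : Measure ℂ) [IsFiniteMeasure μ]
    (hμT : μ (Metric.sphere (0 : ℂ) 1)ᶜ = 0)
    (φ : ℕ → Polynomial ℂ)
    (hdeg : ∀ k, (φ k).degree = (k : ℕ))
    (horth : ∀ k m, ∫ z, (φ k).eval z * conj ((φ m).eval z) ∂μ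
        = if k = m then 1 else 0)
    (n : ℕ) (w : ℂ)
    (ζ : Fin (n + 1) → ℂ)
    (hζT : ∀ j, ζ j ∈ Metric.sphere (0 : ℂ) 1)
    (hζinj : Function.Injective ζ)
    (hζ0 : ∀ j, paraOrtho φ n w (ζ j) = 0)
    (f : ℂ → ℂ) (hf : ContinuousOn f (Metric.sphere (0 : ℂ) 1))
    (g : ℂ → ℂ) (hg : MemLp g 2 μ) :
    ‖(∫ z, lagrangeInterp φ n ζ f z * conj (g z) ∂μ)‖
      ≤ Real.sqrt (μ Set.univ).toReal
        * sSup ((fun z => ‖(f z)‖) '' Metric.sphere (0 : ℂ) 1)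
        * Real.sqrt (∫ z,
            ‖(∑ k ∈ Finset.range (n + 1),
              (∫ x, g x * conj ((φ k).eval x) ∂μ) * (φ k).eval z)‖ ^ 2 ∂μ) := by
  have hμ : ∀ᵐ z ∂μ, z ∈ Metric.sphere (0 : ℂ) 1 := mem_ae_iff.2 hμT
  set P := polyToL2 hμ
  have hφ : Orthonormal ℂ (P ∘ φ) := orthonormal_polyToL2_comp hμ horth
  set M := sSup ((fun z => ‖f z‖) '' Metric.sphere (0 : ℂ) 1)
  have hfM : ∀ j, ‖f (ζ j)‖ ≤ M := fun j =>
    le_csSup ((isCompact_sphere 0 1).image_of_continuousOn hf.norm).bddAbove ⟨ζ j, hζT j, rfl⟩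
  set L := lagrangeInterpPoly φ n ζ f
  set S := fourierPartialSum P φ n (hg.toLp g)
  calc ‖∫ z, lagrangeInterp φ n ζ f z * conj (g z) ∂μ‖ = ‖⟪hg.toLp g, P L⟫_ℂ‖ := by
        simp_rw [← eval_lagrangeInterpPoly, integral_eval_mul_conj hμ hg]; rfl
    _ = ‖⟪P S, P L⟫_ℂ‖ := by
        rw [inner_fourierPartialSum_left hφ hdeg _ (natDegree_lagrangeInterpPoly_le hdeg ζ f)]
    _ ≤ ‖P S‖ * ‖P L‖ := norm_inner_le_norm _ _
    _ ≤ ‖P S‖ * (M * ‖P 1‖) := by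
        gcongr
        exact norm_lagrangeInterpPoly_le hφ hdeg (inner_polyToL2_X_mul hμ)
          (fun j => mem_sphere_zero_iff_norm.1 (hζT j)) hζinj hζ0
          ((norm_nonneg _).trans (hfM 0)) hfM
    _ = _ := by
        rw [norm_polyToL2, norm_polyToL2]
        simp only [S, P, eval_fourierPartialSum_polyToL2 hμ hg, eval_one, norm_one, one_pow,
          integral_const, smul_eq_mul, mul_one, Measure.real]
        ring

/-- **Key estimate in the proof of the uniform boundedness lemma.** For every continuous
`f : T → ℂ` and every `g ∈ L²(μ)`,
`|∫_T L_n(f) conj(g) dμ| ≤ μ(T)^{1/2} · (max_{z∈T} |f(z)|) · ‖S_n(g)‖_{L²(μ)}`,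
where `S_n(g) = ∑_{k=0}^n ⟨g, φ_k⟩ φ_k` is the `n`-th partial sum of the Fourier expansion
of `g` in the orthonormal polynomials `φ_k`. -/
theorem abs_integral_lagrangeInterp_mul_conj_le
    (μ : Measure ℂ) [IsFiniteMeasure μ]
    (hμT : μ (Metric.sphere (0 : ℂ) 1)ᶜ = 0)
    (hμinf : ∀ s : Finset ℂ, μ ((s : Set ℂ)ᶜ) ≠ 0)
    (φ : ℕ → Polynomial ℂ)
    (hdeg : ∀ k, (φ k).degree = (k : ℕ))
    (hlead : ∀ k, 0 < ((φ k).leadingCoeff).re ∧ ((φ k).leadingCoeff).im = 0)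
    (horth : ∀ k m, ∫ z, (φ k).eval z * conj ((φ m).eval z) ∂μ
        = if k = m then 1 else 0)
    (n : ℕ) (w : ℂ) (hw : w ∈ Metric.sphere (0 : ℂ) 1)
    (ζ : Fin (n + 1) → ℂ)
    (hζT : ∀ j, ζ j ∈ Metric.sphere (0 : ℂ) 1)
    (hζinj : Function.Injective ζ)
    (hζ0 : ∀ j, paraOrtho φ n w (ζ j) = 0)
    (f : ℂ → ℂ) (hf : ContinuousOn f (Metric.sphere (0 : ℂ) 1))
    (g : ℂ → ℂ) (hg : MemLp g 2 μ) :
    ‖(∫ z, lagrangeInterp φ n ζ f z * conj (g z) ∂μ)‖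
      ≤ Real.sqrt (μ Set.univ).toReal
        * sSup ((fun z => ‖(f z)‖) '' Metric.sphere (0 : ℂ) 1)
        * Real.sqrt (∫ z,
            ‖(∑ k ∈ Finset.range (n + 1),
              (∫ x, g x * conj ((φ k).eval x) ∂μ) * (φ k).eval z)‖ ^ 2 ∂μ) :=
  abs_integral_lagrangeInterp_mul_conj_le_general μ hμT φ hdeg horth n w ζ hζT hζinj hζ0 f hf g hg
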